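/- arXiv:math/0312376 — 2 statements merged into one kernel-verified Lean document; each statement's English description precedes it below -/
import Mathlib

section
/- For every real μ with μ > γ and every x ∈ ℂ^n, one has μ²·x*Mx + μ·x*Cx + x*Kx ≥ (μ − γ)²·x*Mx; in particular the Hermitian matrix K(μ) = μ²M + μC + K is positive definite for every real μ > γ. -/
open Matrix
open scoped ComplexOrder

noncomputable section

/-- The value `x* P x` (which is real for Hermitian `P`), taken as its real part. -/
def qf {n : ℕ} (P : Matrix (Fin n) (Fin n) ℂ) (x : Fin n → ℂ) : ℝ :=
  (star x ⬝ᵥ P.mulVec x).re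

/-- The (positive semidefinite) square root of a positive semidefinite matrix,
extended by `0` to all matrices. -/
def msqrt {n : ℕ} (P : Matrix (Fin n) (Fin n) ℂ) : Matrix (Fin n) (Fin n) ℂ :=
  open scoped Classical in
  if h : P.PosSemidef then
    h.1.eigenvectorUnitary.1 * diagonal ((↑) ∘ (√·) ∘ h.1.eigenvalues) *
      (star h.1.eigenvectorUnitary : Matrix (Fin n) (Fin n) ℂ)
  else 0

/-- The quadratic matrix pencil `K(λ) = λ²M + λC + K`. -/
def Kpen {n : ℕ} (M C K : Matrix (Fin n) (Fin n) ℂ) (lam : ℂ) :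
    Matrix (Fin n) (Fin n) ℂ :=
  lam ^ 2 • M + lam • C + K

/-- The real part of the `+`-root of the scalar quadratic
`m(x) λ² + c(x) λ + k(x) = 0`. -/
def rfun {n : ℕ} (M C K : Matrix (Fin n) (Fin n) ℂ) (x : Fin n → ℂ) : ℝ :=
  open scoped Classical in
  if (qf C x) ^ 2 ≥ 4 * qf M x * qf K x then
    (-(qf C x) + Real.sqrt ((qf C x) ^ 2 - 4 * qf M x * qf K x)) / (2 * qf M x)
  else
    -(qf C x) / (2 * qf M x)

/-- The spectral-shift bound `γ = sup_{x ≠ 0} Re p₊(x)`. -/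
def gam {n : ℕ} (M C K : Matrix (Fin n) (Fin n) ℂ) : ℝ :=
  sSup {y : ℝ | ∃ x : Fin n → ℂ, x ≠ 0 ∧ rfun M C K x = y}

/-- The phase-space matrix `A = [[0, K½ M⁻½], [−M⁻½ K½, −M⁻½ C M⁻½]]`. -/
def phaseA {n : ℕ} (M C K : Matrix (Fin n) (Fin n) ℂ) :
    Matrix (Fin n ⊕ Fin n) (Fin n ⊕ Fin n) ℂ :=
  fromBlocks 0 (msqrt K * (msqrt M)⁻¹)
    (-((msqrt M)⁻¹ * msqrt K)) (-((msqrt M)⁻¹ * C * (msqrt M)⁻¹))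

/-- The operator norm of a matrix with respect to the Euclidean norm. -/
def opNorm {m : Type*} [Fintype m] [DecidableEq m] (A : Matrix m m ℂ) : ℝ :=
  ‖toEuclideanCLM (𝕜 := ℂ) A‖

/-- The block matrix `L(μ) = [[K½ K(μ)⁻½, 0], [μ M½ K(μ)⁻½, I]]`. -/
def Lmat {n : ℕ} (M C K : Matrix (Fin n) (Fin n) ℂ) (mu : ℝ) :
    Matrix (Fin n ⊕ Fin n) (Fin n ⊕ Fin n) ℂ :=
  fromBlocks (msqrt K * (msqrt (Kpen M C K (mu : ℂ)))⁻¹) 0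
    ((mu : ℂ) • (msqrt M * (msqrt (Kpen M C K (mu : ℂ)))⁻¹)) 1


/-!
For `x ≠ 0`, `r(x)` is the real part of the rightmost root of `m λ² + c λ + k` with
`m = m(x)`, `c = c(x)`, `k = k(x)`. Whenever `μ ≥ r(x)` this quadratic is at least `m (μ - r(x))²`:
with real roots `r₋ ≤ r₊ = r(x)` it equals `m (μ - r₊)(μ - r₋)`, otherwise complete the square.
Since `c, k > 0` every `r(x)` is negative, so `γ` is a genuine supremum (not the junk value of
`sSup` on an unbounded set), and `r(x) ≤ γ ≤ μ` gives `(μ - γ)² m ≤ (μ - r(x))² m`.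
-/

def quadRootRe (m c k : ℝ) : ℝ :=
  open scoped Classical in
  if c ^ 2 ≥ 4 * m * k then (-c + √(c ^ 2 - 4 * m * k)) / (2 * m) else -c / (2 * m)

lemma quadRootRe_neg {m c k : ℝ} (hm : 0 < m) (hc : 0 < c) (hk : 0 < k) :
    quadRootRe m c k < 0 := by
  unfold quadRootRe
  split_ifs with hdisc
  · have hsqrt : √(c ^ 2 - 4 * m * k) < c :=
      (Real.sqrt_lt' hc).2 (by nlinarith [mul_pos hm hk])
    exact div_neg_of_neg_of_pos (by linarith) (by positivity)
  · exact div_neg_of_neg_of_pos (by linarith) (by positivity)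

lemma sq_sub_quadRootRe_mul_le {m c k μ : ℝ} (hm : 0 < m) (hμ : quadRootRe m c k ≤ μ) :
    (μ - quadRootRe m c k) ^ 2 * m ≤ μ ^ 2 * m + μ * c + k := by
  unfold quadRootRe at hμ ⊢
  split_ifs at hμ ⊢ with hdisc
  · set s := √(c ^ 2 - 4 * m * k)
    have hs : 0 ≤ s := Real.sqrt_nonneg _
    have hs2 : s ^ 2 = c ^ 2 - 4 * m * k := Real.sq_sqrt (by linarith)
    have hfactor : μ ^ 2 * m + μ * c + k
        = m * (μ - (-c + s) / (2 * m)) * (μ - (-c - s) / (2 * m)) := by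
      field_simp
      linear_combination hs2
    have hroots : (-c - s) / (2 * m) ≤ (-c + s) / (2 * m) := by gcongr; linarith
    rw [hfactor]
    nlinarith [mul_nonneg (mul_nonneg hm.le (sub_nonneg.2 hμ)) (sub_nonneg.2 hroots)]
  · have hsq : μ ^ 2 * m + μ * c + k
        = (μ - -c / (2 * m)) ^ 2 * m + (4 * m * k - c ^ 2) / (4 * m) := by
      field_simp
      ring
    rw [hsq]
    have : 0 ≤ (4 * m * k - c ^ 2) / (4 * m) := div_nonneg (by linarith) (by positivity)
    linarith

section QuadraticForm

variable {n : ℕ}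

lemma qf_pos {P : Matrix (Fin n) (Fin n) ℂ} (hP : P.PosDef) {x : Fin n → ℂ} (hx : x ≠ 0) :
    0 < qf P x :=
  (Complex.pos_iff.1 (hP.dotProduct_mulVec_pos hx)).1

lemma Matrix.IsHermitian.ofReal_qf {P : Matrix (Fin n) (Fin n) ℂ} (hP : P.IsHermitian)
    (x : Fin n → ℂ) : (qf P x : ℂ) = star x ⬝ᵥ P *ᵥ x :=
  Complex.ext rfl (hP.im_star_dotProduct_mulVec_self x).symm

lemma Matrix.PosDef.of_qf_pos {P : Matrix (Fin n) (Fin n) ℂ} (hP : P.IsHermitian)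
    (hpos : ∀ x, x ≠ 0 → 0 < qf P x) : P.PosDef :=
  .of_dotProduct_mulVec_pos hP fun x hx ↦ by
    rw [← hP.ofReal_qf]
    exact_mod_cast hpos x hx

lemma qf_Kpen_ofReal (M C K : Matrix (Fin n) (Fin n) ℂ) (μ : ℝ) (x : Fin n → ℂ) :
    qf (Kpen M C K μ) x = μ ^ 2 * qf M x + μ * qf C x + qf K x := by
  simp only [qf, Kpen, add_mulVec, smul_mulVec, dotProduct_add, dotProduct_smul, smul_eq_mul,
    Complex.add_re, ← Complex.ofReal_pow, Complex.re_ofReal_mul]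

lemma isHermitian_Kpen_ofReal {M C K : Matrix (Fin n) (Fin n) ℂ} (hM : M.IsHermitian)
    (hC : C.IsHermitian) (hK : K.IsHermitian) (μ : ℝ) : (Kpen M C K μ).IsHermitian :=
  ((hM.smul (by simp [IsSelfAdjoint, Complex.conj_ofReal] : IsSelfAdjoint ((μ : ℂ) ^ 2))).add
    (hC.smul (Complex.conj_ofReal μ))).add hK

lemma rfun_eq_quadRootRe (M C K : Matrix (Fin n) (Fin n) ℂ) (x : Fin n → ℂ) :
    rfun M C K x = quadRootRe (qf M x) (qf C x) (qf K x) := rfl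

end QuadraticForm

section Gamma

variable {n : ℕ} {M C K : Matrix (Fin n) (Fin n) ℂ}

lemma rfun_le_gam (hM : M.PosDef) (hC : C.PosDef) (hK : K.PosDef) {x : Fin n → ℂ}
    (hx : x ≠ 0) :
    rfun M C K x ≤ gam M C K := by
  refine le_csSup ⟨0, ?_⟩ ⟨x, hx, rfl⟩
  rintro _ ⟨y, hy, rfl⟩
  rw [rfun_eq_quadRootRe]
  exact (quadRootRe_neg (qf_pos hM hy) (qf_pos hC hy) (qf_pos hK hy)).le

lemma sq_sub_gam_mul_qf_le (hM : M.PosDef) (hC : C.PosDef) (hK : K.PosDef) {μ : ℝ}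
    (hμ : gam M C K ≤ μ) (x : Fin n → ℂ) :
    (μ - gam M C K) ^ 2 * qf M x ≤ μ ^ 2 * qf M x + μ * qf C x + qf K x := by
  rcases eq_or_ne x 0 with rfl | hx
  · simp [qf]
  have hr := rfun_le_gam hM hC hK hx
  rw [rfun_eq_quadRootRe] at hr
  calc (μ - gam M C K) ^ 2 * qf M x
      ≤ (μ - quadRootRe (qf M x) (qf C x) (qf K x)) ^ 2 * qf M x := by
        gcongr
        exact (qf_pos hM hx).le
    _ ≤ μ ^ 2 * qf M x + μ * qf C x + qf K x :=
        sq_sub_quadRootRe_mul_le (qf_pos hM hx) (hr.trans hμ)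

end Gamma

theorem Kmu_posDef_of_gt_gamma_general {n : ℕ}
    (M C K : Matrix (Fin n) (Fin n) ℂ)
    (hM : M.PosDef) (hC : C.PosDef) (hK : K.PosDef) :
    ∀ mu : ℝ, gam M C K < mu →
      (∀ x : Fin n → ℂ,
        mu ^ 2 * qf M x + mu * qf C x + qf K x ≥ (mu - gam M C K) ^ 2 * qf M x) ∧
      (Kpen M C K (mu : ℂ)).PosDef := by
  intro mu hmu
  have hbound := sq_sub_gam_mul_qf_le hM hC hK hmu.le
  refine ⟨hbound, .of_qf_pos (isHermitian_Kpen_ofReal hM.1 hC.1 hK.1 mu) fun x hx ↦ ?_⟩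
  rw [qf_Kpen_ofReal]
  exact (mul_pos (pow_pos (sub_pos.2 hmu) 2) (qf_pos hM hx)).trans_le (hbound x)

/-- For every real `μ > γ` and every `x`, the shifted quadratic form is bounded
below by `(μ − γ)² x*Mx`; in particular `K(μ)` is positive definite. -/
theorem Kmu_posDef_of_gt_gamma {n : ℕ} (hn : 1 ≤ n)
    (M C K : Matrix (Fin n) (Fin n) ℂ)
    (hM : M.PosDef) (hC : C.PosDef) (hK : K.PosDef) :
    ∀ mu : ℝ, gam M C K < mu →
      (∀ x : Fin n → ℂ,
        mu ^ 2 * qf M x + mu * qf C x + qf K x ≥ (mu - gam M C K) ^ 2 * qf M x) ∧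
      (Kpen M C K (mu : ℂ)).PosDef :=
  Kmu_posDef_of_gt_gamma_general M C K hM hC hK

end
end

section
/- γ equals the infimum of the set of real numbers μ for which both K(μ) = μ²M + μC + K and 2μM + C are positive definite. -/
/-!
For fixed `x ≠ 0`, `r(x)` is the largest real part of a root of the scalar quadratic
`m(x) λ² + c(x) λ + k(x)`, so `r(x) < μ` exactly when this quadratic and its derivative are both
positive at `μ`, i.e. `x* K(μ) x > 0` and `x* (2μM + C) x > 0`. Hence the admissible `μ` are
precisely the strict upper bounds of `{r(x) | x ≠ 0}`, whose infimum is the supremum `γ`.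
-/

open Matrix
open scoped ComplexOrder

noncomputable section

/-- Lean's `sSup` and `sInf` on `ℝ` take the junk value `0` on both the empty and the unbounded
side, so this holds for every set. -/
theorem Real.sInf_setOf_forall_lt_eq_sSup (R : Set ℝ) :
    sInf {μ : ℝ | ∀ y ∈ R, y < μ} = sSup R := by
  rcases R.eq_empty_or_nonempty with rfl | hne
  · simp
  by_cases hbdd : BddAbove R
  swap
  · have : {μ : ℝ | ∀ y ∈ R, y < μ} = ∅ :=
      Set.eq_empty_of_forall_notMem fun μ hμ => hbdd ⟨μ, fun y hy => (hμ y hy).le⟩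
    rw [this, Real.sInf_empty, Real.sSup_of_not_bddAbove hbdd]
  have hlb : sSup R ∈ lowerBounds {μ : ℝ | ∀ y ∈ R, y < μ} :=
    fun μ hμ => csSup_le hne fun y hy => (hμ y hy).le
  refine le_antisymm (le_of_forall_pos_le_add fun ε hε => csInf_le ⟨_, hlb⟩ ?_)
    (le_csInf ⟨sSup R + 1, ?_⟩ hlb)
  all_goals
    intro y hy
    linarith [le_csSup hbdd hy]

def quadRoot (m c k : ℝ) : ℝ :=
  open scoped Classical in
  if c ^ 2 ≥ 4 * m * k then (-c + √(c ^ 2 - 4 * m * k)) / (2 * m) else -c / (2 * m)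

/-- `quadRoot m c k` is the largest real part of a root of `m λ² + c λ + k`; to its right the
quadratic is positive and increasing. -/
theorem quadRoot_lt_iff {m c k μ : ℝ} (hm : 0 < m) :
    quadRoot m c k < μ ↔ 0 < m * μ ^ 2 + c * μ + k ∧ 0 < 2 * m * μ + c := by
  unfold quadRoot
  rw [apply_ite (· < μ), div_lt_iff₀ (by positivity), div_lt_iff₀ (by positivity)]
  split_ifs with hdisc
  · have hsq := Real.sq_sqrt (sub_nonneg.mpr hdisc)
    have hs0 := Real.sqrt_nonneg (c ^ 2 - 4 * m * k)
    constructor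
    · intro h
      exact ⟨by nlinarith, by linarith⟩
    · rintro ⟨hq, hd⟩
      nlinarith
  · constructor
    · intro h
      exact ⟨by nlinarith, by linarith⟩
    · rintro ⟨-, hd⟩
      linarith

theorem rfun_eq_quadRoot {n : ℕ} (M C K : Matrix (Fin n) (Fin n) ℂ) (x : Fin n → ℂ) :
    rfun M C K x = quadRoot (qf M x) (qf C x) (qf K x) := by
  unfold rfun quadRoot
  split_ifs <;> rfl

theorem posDef_iff_forall_qf_pos {n : ℕ} {A : Matrix (Fin n) (Fin n) ℂ} (hA : A.IsHermitian) :
    A.PosDef ↔ ∀ x : Fin n → ℂ, x ≠ 0 → 0 < qf A x := by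
  rw [posDef_iff_dotProduct_mulVec, and_iff_right hA]
  refine forall₂_congr fun x _ => ?_
  have him : (star x ⬝ᵥ A *ᵥ x).im = 0 := hA.im_star_dotProduct_mulVec_self x
  rw [Complex.lt_def, him, Complex.zero_im, and_iff_left rfl]
  rfl

theorem qf_Kpen {n : ℕ} (M C K : Matrix (Fin n) (Fin n) ℂ) (μ : ℝ) (x : Fin n → ℂ) :
    qf (Kpen M C K μ) x = qf M x * μ ^ 2 + qf C x * μ + qf K x := by
  simp only [qf, Kpen, add_mulVec, smul_mulVec, dotProduct_add, dotProduct_smul, smul_eq_mul,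
    Complex.add_re, ← Complex.ofReal_pow, Complex.re_ofReal_mul]
  ring

theorem qf_two_mul_smul_add {n : ℕ} (M C : Matrix (Fin n) (Fin n) ℂ) (μ : ℝ) (x : Fin n → ℂ) :
    qf (((2 * μ : ℝ) : ℂ) • M + C) x = 2 * qf M x * μ + qf C x := by
  simp only [qf, add_mulVec, smul_mulVec, dotProduct_add, dotProduct_smul, smul_eq_mul,
    Complex.add_re, Complex.re_ofReal_mul]
  ring

theorem isHermitian_Kpen {n : ℕ} {M C K : Matrix (Fin n) (Fin n) ℂ} (hM : M.IsHermitian)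
    (hC : C.IsHermitian) (hK : K.IsHermitian) (μ : ℝ) : (Kpen M C K μ).IsHermitian := by
  have hμ : IsSelfAdjoint (μ : ℂ) := Complex.conj_ofReal μ
  exact ((hM.smul (hμ.pow 2)).add (hC.smul hμ)).add hK

theorem posDef_Kpen_and_iff {n : ℕ} {M C K : Matrix (Fin n) (Fin n) ℂ} (hM : M.PosDef)
    (hC : C.IsHermitian) (hK : K.IsHermitian) (μ : ℝ) :
    ((Kpen M C K μ).PosDef ∧ (((2 * μ : ℝ) : ℂ) • M + C).PosDef) ↔
      ∀ x : Fin n → ℂ, x ≠ 0 → rfun M C K x < μ := by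
  rw [posDef_iff_forall_qf_pos (isHermitian_Kpen hM.1 hC hK μ),
    posDef_iff_forall_qf_pos ((hM.1.smul (Complex.conj_ofReal _)).add hC), ← forall₂_and]
  refine forall₂_congr fun x hx => ?_
  rw [rfun_eq_quadRoot, quadRoot_lt_iff (posDef_iff_forall_qf_pos hM.1 |>.mp hM x hx), qf_Kpen,
    qf_two_mul_smul_add]

theorem gamma_eq_inf_general {n : ℕ}
    (M C K : Matrix (Fin n) (Fin n) ℂ)
    (hM : M.PosDef) (hC : C.PosDef) (hK : K.PosDef) :
    gam M C K =
      sInf {mu : ℝ |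
        (Kpen M C K (mu : ℂ)).PosDef ∧ (((2 * mu : ℝ) : ℂ) • M + C).PosDef} := by
  have hS : {mu : ℝ | (Kpen M C K (mu : ℂ)).PosDef ∧ (((2 * mu : ℝ) : ℂ) • M + C).PosDef} =
      {μ : ℝ | ∀ y ∈ {y : ℝ | ∃ x : Fin n → ℂ, x ≠ 0 ∧ rfun M C K x = y}, y < μ} := by
    ext μ
    simp only [Set.mem_ofPred_eq, posDef_Kpen_and_iff hM hC.1 hK.1, forall_exists_index, and_imp,
      forall_apply_eq_imp_iff₂]
  rw [hS, Real.sInf_setOf_forall_lt_eq_sSup, gam]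

/-- `γ` equals the infimum of the set of real `μ` for which both `K(μ)` and
`2μM + C` are positive definite. -/
theorem gamma_eq_inf {n : ℕ} (hn : 1 ≤ n)
    (M C K : Matrix (Fin n) (Fin n) ℂ)
    (hM : M.PosDef) (hC : C.PosDef) (hK : K.PosDef) :
    gam M C K =
      sInf {mu : ℝ |
        (Kpen M C K (mu : ℂ)).PosDef ∧ (((2 * mu : ℝ) : ℂ) • M + C).PosDef} :=
  gamma_eq_inf_general M C K hM hC hK

end
end
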